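/- arXiv:2512.07098 — 5 statements merged into one kernel-verified Lean document; each statement's English description precedes it below -/
import Mathlib

section
/- Let N be a positive integer and let f ∈ ℚ[X] be a monic polynomial of degree d ≥ 1. Then there exist arbitrarily large positive integers M (that is, for every M₀ there exists M ≥ M₀) such that for every integer i with 1 ≤ i ≤ N, the coefficient of X^(d·M − i) in the power f^M lies in ℤ (i.e., is the image of an integer under the inclusion ℤ → ℚ). -/
/-!
Reversing coefficients turns the coefficient of `X ^ (d * M - i)` in `f ^ M` into the coefficient
of `X ^ i` in `r ^ M`, where `r = f.reverse = 1 + X * h`. Expanding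
`r ^ M = ∑ k, M.choose k * X ^ k * h ^ k`, only the terms with `k ≤ i ≤ N` contribute. The
finitely many rationals `(h ^ k).coeff j` with `k, j ≤ N` have a common denominator `Q`, and once
`Q * N !` divides `M`, every `M.choose k` with `1 ≤ k ≤ N` is divisible by `Q`, because
`k * M.choose k = M * (M - 1).choose (k - 1)`.
-/

open Polynomial Finset
open scoped Nat

theorem Nat.dvd_choose_of_mul_dvd {Q k M : ℕ} (hk : 0 < k) (h : Q * k ∣ M) : Q ∣ M.choose k := by
  obtain ⟨k, rfl⟩ := Nat.exists_eq_add_of_lt hk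
  rcases M with _ | m
  · simp
  · have hchoose := Nat.add_one_mul_choose_eq m k
    rw [zero_add] at h ⊢
    refine Nat.dvd_of_mul_dvd_mul_right k.succ_pos ?_
    rw [← hchoose]
    exact h.mul_right _

theorem Rat.exists_pos_mul_mem_bot {ι : Type*} (s : Finset ι) (q : ι → ℚ) :
    ∃ Q : ℕ, 0 < Q ∧ ∀ x ∈ s, (Q * q x : ℚ) ∈ (⊥ : Subring ℚ) := by
  refine ⟨∏ x ∈ s, (q x).den, prod_pos fun x _ => (q x).den_pos, fun x hx => ?_⟩
  obtain ⟨c, hc⟩ := dvd_prod_of_mem (fun x => (q x).den) hx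
  refine Subring.mem_bot.mpr ⟨c * (q x).num, ?_⟩
  rw [hc]
  push_cast
  rw [mul_comm ((q x).den : ℚ), mul_assoc, Rat.den_mul_eq_num]

theorem Polynomial.reverse_pow_of_domain {R : Type*} [Semiring R] [NoZeroDivisors R]
    (p : R[X]) (n : ℕ) : (p ^ n).reverse = p.reverse ^ n := by
  induction n with
  | zero => simpa using reverse_C (1 : R)
  | succ n ih => rw [pow_succ, reverse_mul_of_domain, ih, pow_succ]

theorem Polynomial.Monic.coeff_pow_sub_eq_coeff_reverse_pow {R : Type*} [Semiring R]
    [NoZeroDivisors R] {p : R[X]} (hp : p.Monic) {M i : ℕ} (hi : i ≤ p.natDegree * M) :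
    (p ^ M).coeff (p.natDegree * M - i) = (p.reverse ^ M).coeff i := by
  rw [← reverse_pow_of_domain, coeff_reverse, hp.natDegree_pow, mul_comm M, revAt_le hi]

theorem Polynomial.coeff_pow_mem_bot_of_dvd {p : ℚ[X]} (hp : p.coeff 0 = 1) {N Q M : ℕ}
    (hQ : ∀ k ∈ Icc 1 N, ∀ j ≤ N, (Q * (p.divX ^ k).coeff j : ℚ) ∈ (⊥ : Subring ℚ))
    (hM : Q * N ! ∣ M) {i : ℕ} (hi : i ≤ N) : (p ^ M).coeff i ∈ (⊥ : Subring ℚ) := by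
  have hp' : p = X * p.divX + 1 := by
    conv_lhs => rw [← X_mul_divX_add p, hp, map_one]
  rw [hp', add_pow, finsetSum_coeff]
  refine Subring.sum_mem _ fun k _ => ?_
  rw [one_pow, mul_one, mul_pow, coeff_mul_natCast, coeff_X_pow_mul']
  split_ifs with hki
  · rcases Nat.eq_zero_or_pos k with rfl | hk
    · rw [pow_zero, coeff_one, Nat.choose_zero_right, Nat.cast_one, mul_one]
      split_ifs
      exacts [Subring.one_mem _, Subring.zero_mem _]
    · obtain ⟨t, ht⟩ := Nat.dvd_choose_of_mul_dvd hk
        ((Nat.mul_dvd_mul_left Q (Nat.dvd_factorial hk (hki.trans hi))).trans hM)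
      rw [ht, Nat.cast_mul, ← mul_assoc, mul_comm _ (Q : ℚ)]
      exact Subring.mul_mem _ (hQ k (mem_Icc.mpr ⟨hk, hki.trans hi⟩) _ (by omega))
        (natCast_mem _ t)
  · rw [zero_mul]
    exact Subring.zero_mem _

theorem Polynomial.exists_forall_coeff_pow_mem_bot {p : ℚ[X]} (hp : p.coeff 0 = 1) (N M₀ : ℕ) :
    ∃ M, M₀ ≤ M ∧ 0 < M ∧ ∀ i ≤ N, (p ^ M).coeff i ∈ (⊥ : Subring ℚ) := by
  obtain ⟨Q, hQ, hQint⟩ := Rat.exists_pos_mul_mem_bot (Icc 1 N ×ˢ range (N + 1))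
    fun kj => (p.divX ^ kj.1).coeff kj.2
  have hQN : 0 < Q * N ! := Nat.mul_pos hQ N.factorial_pos
  refine ⟨(M₀ + 1) * (Q * N !), ?_, Nat.mul_pos M₀.succ_pos hQN, fun i hi =>
    coeff_pow_mem_bot_of_dvd hp (fun k hk j hj => ?_) (dvd_mul_left _ _) hi⟩
  · nlinarith
  · exact hQint (k, j) (mem_product.mpr ⟨hk, mem_range.mpr (Nat.lt_succ_of_le hj)⟩)

theorem stmt_0_general (N : ℕ) (f : Polynomial ℚ) (d : ℕ) (hd : 1 ≤ d)
    (hmonic : f.Monic) (hdeg : f.natDegree = d) :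
    ∀ M₀ : ℕ, ∃ M : ℕ, M₀ ≤ M ∧ 0 < M ∧
      ∀ i : ℕ, 1 ≤ i → i ≤ N →
        (f ^ M).coeff (d * M - i) ∈ Set.range (Int.cast : ℤ → ℚ) := by
  intro M₀
  have hrev : f.reverse.coeff 0 = 1 := by rw [coeff_zero_reverse, hmonic.leadingCoeff]
  obtain ⟨M, hM₀, hM, hint⟩ := exists_forall_coeff_pow_mem_bot hrev N (M₀ + N)
  refine ⟨M, by omega, hM, fun i _ hi => ?_⟩
  have hidM : i ≤ d * M := by nlinarith
  subst hdeg
  rw [hmonic.coeff_pow_sub_eq_coeff_reverse_pow hidM, ← Subring.coe_bot]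
  exact hint i hi

theorem stmt_0 (N : ℕ) (hN : 0 < N) (f : Polynomial ℚ) (d : ℕ) (hd : 1 ≤ d)
    (hmonic : f.Monic) (hdeg : f.natDegree = d) :
    ∀ M₀ : ℕ, ∃ M : ℕ, M₀ ≤ M ∧ 0 < M ∧
      ∀ i : ℕ, 1 ≤ i → i ≤ N →
        (f ^ M).coeff (d * M - i) ∈ Set.range (Int.cast : ℤ → ℚ) :=
  stmt_0_general N f d hd hmonic hdeg
end

section
/- Let U ⊆ ℂ be an open bounded subset and let K = ℂ \ U. Suppose there exist a monic polynomial m ∈ ℝ[X] and a real number c > 1 such that |m(x)| ≥ c for all x ∈ K, where m is evaluated on ℂ via the inclusion ℝ → ℂ. Then there exist a monic polynomial p ∈ ℤ[X] and a real number c' > 1 such that |p(x)| ≥ c' for all x ∈ K, where p is evaluated on ℂ via the inclusion ℤ → ℂ. -/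
/-!
Rounding the coefficients of `m` to the grid `(1 / D) ℤ` gives a monic `f` with `|f| ≥ (c + 1) / 2`
on `K`: on `K` every `|x| ^ i` with `i ≤ deg m` is `O(|m(x)|)`, so the perturbation is relatively
small. If `L! D ^ L ∣ n`, the binomial expansion of `f ^ n = (X ^ d + w) ^ n` shows that the
coefficients of `f ^ n` of index at least `n d - L` are integers. The lower coefficients are then
made integral from the top down by adding multiples, of size at most `1 / 2`, of the monic
polynomials `X ^ r * f ^ j` of degree `j d + r < e d`. On `K` this changes `f ^ n` by `O(|f| ^ e)`,
so for `L = J d`, `n = e + J` and `J` large the resulting monic integer polynomial has modulus at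
least `|f| ^ n / 2 ≥ 2` on `K`.
-/

open Polynomial Finset
open scoped Nat

theorem Nat.pow_dvd_choose_of_factorial_mul_pow_dvd {D L n r : ℕ} (hn : L ! * D ^ L ∣ n)
    (hr : r ≤ L) : D ^ r ∣ n.choose r := by
  obtain _ | r := r
  · simp
  obtain _ | n := n
  · simp
  have hdvd : (r + 1) * D ^ (r + 1) ∣ (n + 1) * n.choose r :=
    ((Nat.mul_dvd_mul (Nat.dvd_factorial r.succ_pos hr) (pow_dvd_pow D hr)).trans hn).mul_right _
  rw [Nat.add_one_mul_choose_eq, mul_comm (r + 1)] at hdvd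
  exact Nat.dvd_of_mul_dvd_mul_right r.succ_pos hdvd

theorem Finset.sum_range_mul_div {M : Type*} [AddCommMonoid M] (f : ℕ → M) (d e : ℕ) :
    ∑ k ∈ range (e * d), f (k / d) = d • ∑ j ∈ range e, f j := by
  induction e with
  | zero => simp
  | succ e ih =>
    have hblock : ∀ i ∈ range d, f ((e * d + i) / d) = f e := fun i hi => by
      rw [mul_comm, Nat.mul_add_div (Nat.zero_lt_of_lt (mem_range.mp hi)),
        Nat.div_eq_of_lt (mem_range.mp hi), add_zero]
    rw [add_one_mul, sum_range_add, ih, sum_congr rfl hblock, sum_range_succ, sum_const,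
      card_range, smul_add]

theorem sum_range_pow_succ_le {c y : ℝ} (hc : 1 < c) (hy : c ≤ y) (e : ℕ) :
    ∑ j ∈ range e, y ^ (j + 1) ≤ c / (c - 1) * y ^ e := by
  have hy₁ : 0 < y - 1 := by linarith
  have hgeom : ∑ j ∈ range e, y ^ (j + 1) = y * (y ^ e - 1) / (y - 1) := by
    simp_rw [pow_succ, ← sum_mul, geom_sum_eq (by linarith : y ≠ 1)]
    ring
  rw [hgeom, div_le_iff₀ hy₁, div_mul_eq_mul_div, div_mul_eq_mul_div, le_div_iff₀ (by linarith)]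
  nlinarith [mul_nonneg (pow_nonneg (by linarith : (0 : ℝ) ≤ y) e) (sub_nonneg.2 hy),
    mul_nonneg (by linarith : (0 : ℝ) ≤ y) (by linarith : (0 : ℝ) ≤ c - 1)]

namespace Polynomial

section Semiring

variable {R : Type*} [Semiring R]

theorem degree_sum_C_mul_lt {T : ℕ → R[X]} (hT : ∀ k, (T k).natDegree ≤ k) (a : ℕ → R) (N : ℕ) :
    (∑ k ∈ range N, C (a k) * T k).degree < N := by
  rw [degree_lt_iff_coeff_zero]
  intro i hi
  rw [finsetSum_coeff]
  refine sum_eq_zero fun k hk => ?_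
  rw [coeff_C_mul, coeff_eq_zero_of_natDegree_lt ((hT k).trans_lt ((mem_range.mp hk).trans_le hi)),
    mul_zero]

noncomputable def adicMonomial (f : R[X]) (k : ℕ) : R[X] :=
  X ^ (k % f.natDegree) * f ^ (k / f.natDegree)

theorem isMonicOfDegree_adicMonomial [Nontrivial R] {f : R[X]} (hf : f.Monic) (k : ℕ) :
    (adicMonomial f k).IsMonicOfDegree k := by
  have := (isMonicOfDegree_X_pow R (k % f.natDegree)).mul
    ((⟨rfl, hf⟩ : f.IsMonicOfDegree f.natDegree).pow (k / f.natDegree))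
  rwa [Nat.mod_add_div] at this

end Semiring

section CommRing

variable {R : Type*} [CommRing R]

theorem coeff_X_pow_add_pow_mem_range {w : R[X]} {d D L n i : ℕ} (hw : w.natDegree < d)
    (hDw : C (D : R) * w ∈ lifts (Int.castRingHom R)) (hn : L ! * D ^ L ∣ n)
    (hi : n * d ≤ i + L) : ((X ^ d + w) ^ n).coeff i ∈ Set.range (Int.castRingHom R) := by
  rw [← RingHom.coe_range, add_comm, add_pow, finsetSum_coeff]
  refine Subring.sum_mem _ fun r hr => ?_
  by_cases hrL : r ≤ L
  · obtain ⟨q, hq⟩ := Nat.pow_dvd_choose_of_factorial_mul_pow_dvd hn hrL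
    have hterm : w ^ r * (X ^ d) ^ (n - r) * (n.choose r : R[X]) =
        (C (D : R) * w) ^ r * X ^ (d * (n - r)) * (q : R[X]) := by
      rw [hq]
      simp only [Nat.cast_mul, Nat.cast_pow, ← C_eq_natCast, mul_pow, ← C_pow, pow_mul]
      ring
    have hlifts :
        w ^ r * (X ^ d) ^ (n - r) * (n.choose r : R[X]) ∈ lifts (Int.castRingHom R) := by
      rw [hterm]
      exact mul_mem (mul_mem (pow_mem hDw _) (X_pow_mem_lifts _ _)) (natCast_mem _ _)
    exact RingHom.mem_range.mpr ((lifts_iff_coeff_lifts _).mp hlifts i)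
  · have hr : r ≤ n := Nat.lt_succ_iff.mp (mem_range.mp hr)
    have hdeg : (w ^ r * (X ^ d) ^ (n - r) * (n.choose r : R[X])).natDegree < i := by
      have hdeg_mul := natDegree_mul_le (p := w ^ r * (X ^ d) ^ (n - r)) (q := (n.choose r : R[X]))
      have hdeg_mul' := natDegree_mul_le (p := w ^ r) (q := (X ^ d) ^ (n - r))
      have hdeg_w : (w ^ r).natDegree ≤ r * w.natDegree := natDegree_pow_le
      have hdeg_X : ((X ^ d : R[X]) ^ (n - r)).natDegree ≤ d * (n - r) := by
        rw [← pow_mul]; exact natDegree_X_pow_le _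
      have hw_succ : r * w.natDegree + r ≤ r * d := by
        rw [← Nat.mul_succ]; exact Nat.mul_le_mul_left r hw
      have hsplit : d * (n - r) + r * d = n * d := by
        rw [mul_comm r, ← Nat.mul_add, Nat.sub_add_cancel hr, mul_comm]
      rw [natDegree_natCast] at hdeg_mul
      omega
    rw [coeff_eq_zero_of_natDegree_lt hdeg]
    exact zero_mem _

theorem IsMonicOfDegree.coeff_pow_mem_range {f : R[X]} {d D L n i : ℕ}
    (hf : f.IsMonicOfDegree d) (hfD : C (D : R) * f ∈ lifts (Int.castRingHom R))
    (hn : L ! * D ^ L ∣ n) (hi : n * d ≤ i + L) :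
    (f ^ n).coeff i ∈ Set.range (Int.castRingHom R) := by
  rcases eq_or_ne d 0 with rfl | hd
  · rw [isMonicOfDegree_zero_iff.mp hf, one_pow]
    exact (lifts_iff_coeff_lifts 1).mp (one_mem _) i
  obtain ⟨w, rfl, hw⟩ := hf.exists_natDegree_lt hd
  refine coeff_X_pow_add_pow_mem_range hw ?_ hn hi
  rw [lifts_iff_liftsRing] at hfD ⊢
  have hX : C (D : R) * X ^ d ∈ liftsRing (Int.castRingHom R) := by
    rw [← lifts_iff_liftsRing]
    exact mul_mem (by simp) (X_pow_mem_lifts _ _)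
  simpa [mul_add] using sub_mem hfD hX

end CommRing

section FloorRing

variable {R : Type*} [Field R] [LinearOrder R] [IsStrictOrderedRing R] [FloorRing R]

theorem exists_coeff_eq_round_div (p : R[X]) (D : ℕ) :
    ∃ q : R[X], C (D : R) * q ∈ lifts (Int.castRingHom R) ∧
      ∀ i, q.coeff i = round (D * p.coeff i) / D := by
  set q := ∑ i ∈ range (p.natDegree + 1), C ((round ((D : R) * p.coeff i) : R) / D) * X ^ i
  have hq : ∀ i, q.coeff i = round (D * p.coeff i) / D := by
    intro i
    simp only [q, finsetSum_coeff, coeff_C_mul_X_pow, sum_ite_eq, mem_range]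
    split_ifs with hi
    · rfl
    · simp [coeff_eq_zero_of_natDegree_lt (not_lt.mp hi)]
  refine ⟨q, (lifts_iff_coeff_lifts _).mpr fun i => ?_, hq⟩
  rw [coeff_C_mul, hq]
  rcases eq_or_ne (D : R) 0 with hD | hD
  · exact ⟨0, by simp [hD]⟩
  · exact ⟨round (D * p.coeff i), by simp [mul_div_cancel₀ _ hD]⟩

theorem exists_add_sum_C_mul_mem_lifts {T : ℕ → R[X]} (hT : ∀ k, (T k).IsMonicOfDegree k) (N : ℕ)
    {P : R[X]} (hP : ∀ i, N ≤ i → P.coeff i ∈ Set.range (Int.castRingHom R)) :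
    ∃ ε : ℕ → R, (∀ k, |ε k| ≤ 1 / 2) ∧
      P + ∑ k ∈ range N, C (ε k) * T k ∈ lifts (Int.castRingHom R) := by
  induction N generalizing P with
  | zero => exact ⟨0, by simp, by simpa [lifts_iff_coeff_lifts] using hP⟩
  | succ N ih =>
    set ε₀ := (round (P.coeff N) : R) - P.coeff N
    have hTN : (T N).coeff N = 1 := by
      simpa only [(hT N).natDegree_eq] using (hT N).monic.coeff_natDegree
    have hP' : ∀ i, N ≤ i → (P + C ε₀ * T N).coeff i ∈ Set.range (Int.castRingHom R) := by
      intro i hi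
      rw [coeff_add, coeff_C_mul]
      rcases hi.eq_or_lt with rfl | hlt
      · rw [hTN]
        exact ⟨round (P.coeff N), by simp [ε₀]⟩
      · rw [coeff_eq_zero_of_natDegree_lt ((hT N).natDegree_eq.trans_lt hlt), mul_zero, add_zero]
        exact hP i hlt
    obtain ⟨ε, hε, hlifts⟩ := ih hP'
    refine ⟨Function.update ε N ε₀, fun k => ?_, ?_⟩
    · rcases eq_or_ne k N with rfl | hk
      · simpa [ε₀, abs_sub_comm] using abs_sub_round (P.coeff k)
      · simpa [hk] using hε k
    · rw [sum_range_succ, Function.update_self,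
        sum_congr rfl fun k hk => by rw [Function.update_of_ne (mem_range.mp hk).ne]]
      convert hlifts using 1
      ring

theorem Monic.exists_monic_map_eq_pow_add_sum {f : R[X]} (hf : f.Monic) {D L n e : ℕ}
    (hfD : C (D : R) * f ∈ lifts (Int.castRingHom R)) (hn : L ! * D ^ L ∣ n)
    (he : n * f.natDegree ≤ e * f.natDegree + L) (hen : e ≤ n) :
    ∃ (p : ℤ[X]) (ε : ℕ → R), p.Monic ∧ (∀ k, |ε k| ≤ 1 / 2) ∧
      p.map (Int.castRingHom R) =
        f ^ n + ∑ k ∈ range (e * f.natDegree), C (ε k) * adicMonomial f k := by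
  obtain ⟨ε, hε, hg⟩ := exists_add_sum_C_mul_mem_lifts (isMonicOfDegree_adicMonomial hf)
    (e * f.natDegree) fun i hi => IsMonicOfDegree.coeff_pow_mem_range ⟨rfl, hf⟩ hfD hn (by omega)
  have hg_monic : (f ^ n + ∑ k ∈ range (e * f.natDegree), C (ε k) * adicMonomial f k).Monic := by
    refine (hf.pow n).add_of_left ((degree_sum_C_mul_lt
      (fun k => (isMonicOfDegree_adicMonomial hf k).natDegree_eq.le) _ _).trans_le ?_)
    rw [degree_eq_natDegree (hf.pow n).ne_zero, hf.natDegree_pow]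
    exact_mod_cast Nat.mul_le_mul_right _ hen
  obtain ⟨p, hp, -, hp_monic⟩ := lifts_and_degree_eq_and_monic hg hg_monic
  exact ⟨p, ε, hp_monic, hε, hp⟩

end FloorRing

section Growth

variable {𝕜 A : Type*} [NormedField 𝕜] [NormedDivisionRing A] [NormedAlgebra 𝕜 A]

theorem Monic.norm_pow_natDegree_le_two_mul_norm_aeval {P : 𝕜[X]} (hP : P.Monic) {x : A}
    (hx₁ : 1 ≤ ‖x‖) (hx : 2 * ∑ i ∈ range P.natDegree, ‖P.coeff i‖ ≤ ‖x‖) :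
    ‖x‖ ^ P.natDegree ≤ 2 * ‖aeval x P‖ := by
  set d := P.natDegree
  set S := ∑ i ∈ range d, ‖P.coeff i‖ * ‖x‖ ^ i
  have hP_eval : aeval x P = x ^ d + ∑ i ∈ range d, P.coeff i • x ^ i := by
    conv_lhs => rw [hP.as_sum]
    simp [Algebra.smul_def, d]
  have hS : ‖∑ i ∈ range d, P.coeff i • x ^ i‖ ≤ S :=
    (norm_sum_le _ _).trans_eq (sum_congr rfl fun i _ => by rw [norm_smul, norm_pow])
  have hxS : ‖x‖ * S ≤ (∑ i ∈ range d, ‖P.coeff i‖) * ‖x‖ ^ d := by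
    rw [mul_sum, sum_mul]
    refine sum_le_sum fun i hi => ?_
    calc ‖x‖ * (‖P.coeff i‖ * ‖x‖ ^ i) = ‖P.coeff i‖ * ‖x‖ ^ (i + 1) := by ring
      _ ≤ ‖P.coeff i‖ * ‖x‖ ^ d := by gcongr; exact mem_range.mp hi
  have h2S : 2 * S ≤ ‖x‖ ^ d := by
    refine le_of_mul_le_mul_left ?_ (by linarith : 0 < ‖x‖)
    nlinarith [pow_nonneg (norm_nonneg x) d]
  have hxd : ‖x‖ ^ d ≤ ‖aeval x P‖ + S := by
    rw [← norm_pow, ← add_sub_cancel_right (x ^ d) (∑ i ∈ range d, P.coeff i • x ^ i), ← hP_eval]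
    exact (norm_sub_le _ _).trans (by gcongr)
  linarith

theorem Monic.exists_norm_pow_le_mul_max_norm_aeval {P : 𝕜[X]} (hP : P.Monic) :
    ∃ B, 0 ≤ B ∧ ∀ (x : A) (r : ℕ), r ≤ P.natDegree → ‖x‖ ^ r ≤ B * max 1 ‖aeval x P‖ := by
  set R₀ := 2 * ∑ i ∈ range P.natDegree, ‖P.coeff i‖ + 1
  have hR₀ : 1 ≤ R₀ := by
    have := sum_nonneg fun i (_ : i ∈ range P.natDegree) => norm_nonneg (P.coeff i)
    linarith
  refine ⟨R₀ ^ P.natDegree + 2, by positivity, fun x r hr => ?_⟩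
  have hmax : 1 ≤ max 1 ‖aeval x P‖ := le_max_left _ _
  have hpow : 0 ≤ R₀ ^ P.natDegree := by positivity
  refine ((pow_le_pow_left₀ (norm_nonneg _) (le_max_right 1 _) r).trans
    (pow_le_pow_right₀ (le_max_left _ _) hr)).trans ?_
  rcases le_or_gt ‖x‖ R₀ with hx | hx
  · have := pow_le_pow_left₀ (by positivity) (max_le hR₀ hx) P.natDegree
    nlinarith
  · rw [max_eq_right (hR₀.trans hx.le)]
    have := hP.norm_pow_natDegree_le_two_mul_norm_aeval (hR₀.trans hx.le) (by linarith)
    nlinarith [le_max_right 1 ‖aeval x P‖]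

end Growth

variable {A : Type*} [NormedDivisionRing A] [NormedAlgebra ℝ A]

theorem norm_aeval_sum_C_mul_adicMonomial_le {f : ℝ[X]} {x : A} {B : ℝ}
    (hB : ∀ r < f.natDegree, ‖x‖ ^ r ≤ B * ‖aeval x f‖) {ε : ℕ → ℝ} (hε : ∀ k, |ε k| ≤ 1 / 2)
    (e : ℕ) :
    ‖aeval x (∑ k ∈ range (e * f.natDegree), C (ε k) * adicMonomial f k)‖ ≤
      B / 2 * f.natDegree * ∑ j ∈ range e, ‖aeval x f‖ ^ (j + 1) := by
  set d := f.natDegree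
  set y := ‖aeval x f‖
  have hterm : ∀ k ∈ range (e * d),
      ‖aeval x (C (ε k) * adicMonomial f k)‖ ≤ B / 2 * y ^ (k / d + 1) := by
    intro k hk
    have hd : 0 < d := Nat.pos_of_ne_zero fun h => by simp [h] at hk
    rw [adicMonomial, map_mul, map_mul, map_pow, map_pow, aeval_C, aeval_X, norm_mul, norm_mul,
      norm_pow, norm_pow, norm_algebraMap', Real.norm_eq_abs]
    calc |ε k| * (‖x‖ ^ (k % d) * y ^ (k / d)) ≤ 1 / 2 * (B * y * y ^ (k / d)) := by
          gcongr
          exacts [hε k, hB _ (Nat.mod_lt _ hd)]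
      _ = B / 2 * y ^ (k / d + 1) := by ring
  calc _ ≤ ∑ k ∈ range (e * d), ‖aeval x (C (ε k) * adicMonomial f k)‖ := by
        rw [map_sum]; exact norm_sum_le _ _
    _ ≤ ∑ k ∈ range (e * d), B / 2 * y ^ (k / d + 1) := sum_le_sum hterm
    _ = B / 2 * d * ∑ j ∈ range e, y ^ (j + 1) := by
        rw [← mul_sum, sum_range_mul_div (fun j => y ^ (j + 1)), nsmul_eq_mul]; ring

theorem Monic.exists_monic_approx_with_denominator {m : ℝ[X]} (hm : m.Monic) {K : Set A} {c : ℝ}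
    (hc : 1 < c) (hK : ∀ x ∈ K, c ≤ ‖aeval x m‖) :
    ∃ (f : ℝ[X]) (D : ℕ), 0 < D ∧ f.Monic ∧ C (D : ℝ) * f ∈ lifts (Int.castRingHom ℝ) ∧
      ∀ x ∈ K, (c + 1) / 2 ≤ ‖aeval x f‖ := by
  set d := m.natDegree
  obtain ⟨B, -, hB⟩ := hm.exists_norm_pow_le_mul_max_norm_aeval (A := A)
  set D := ⌈(d + 1) * B * c / (c - 1)⌉₊ + 1
  have hD₀ : (0 : ℝ) < D := by positivity
  have hD : (d + 1) * B / (2 * D) * (2 * c) ≤ c - 1 := by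
    have h := (Nat.le_ceil ((d + 1) * B * c / (c - 1))).trans_lt (lt_add_one _)
    rw [div_lt_iff₀ (by linarith)] at h
    rw [div_mul_eq_mul_div, div_le_iff₀ (by positivity)]
    push_cast [D] at h ⊢
    nlinarith
  obtain ⟨f, hfD, hf⟩ := exists_coeff_eq_round_div m D
  have hf_high : ∀ i, d < i → f.coeff i = 0 := fun i hi => by
    rw [hf, coeff_eq_zero_of_natDegree_lt hi]; simp
  have hf_deg : f.natDegree ≤ d :=
    natDegree_le_iff_coeff_eq_zero.mpr fun i hi => hf_high i (by exact_mod_cast hi)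
  have hf_monic : f.Monic := by
    refine monic_of_natDegree_le_of_coeff_eq_one d hf_deg ?_
    rw [hf, hm.coeff_natDegree, mul_one, round_natCast, Int.cast_natCast, div_self hD₀.ne']
  have hfm : ∀ i, |(f - m).coeff i| ≤ 1 / (2 * D) := fun i => by
    rw [coeff_sub, hf, div_sub' hD₀.ne', abs_div, abs_of_pos hD₀, abs_sub_comm]
    calc _ ≤ 1 / 2 / (D : ℝ) := by gcongr; exact abs_sub_round _
      _ = 1 / (2 * D) := by ring
  refine ⟨f, D, Nat.succ_pos _, hf_monic, hfD, fun x hx => ?_⟩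
  set y := ‖aeval x m‖
  have hy : c ≤ y := hK x hx
  have hpow : ∀ i ≤ d, ‖x‖ ^ i ≤ B * y := fun i hi =>
    (hB x i hi).trans_eq (by rw [max_eq_right (hc.le.trans hy)])
  have hdeg : (f - m).natDegree < d + 1 :=
    Nat.lt_succ_of_le ((natDegree_sub_le f m).trans (max_le hf_deg le_rfl))
  have herr : ‖aeval x (f - m)‖ ≤ (d + 1) * B / (2 * D) * y := by
    rw [aeval_eq_sum_range' hdeg]
    calc _ ≤ ∑ i ∈ range (d + 1), ‖(f - m).coeff i • x ^ i‖ := norm_sum_le _ _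
      _ ≤ ∑ i ∈ range (d + 1), 1 / (2 * D) * (B * y) := sum_le_sum fun i hi => by
          rw [norm_smul, norm_pow, Real.norm_eq_abs]
          exact mul_le_mul (hfm i) (hpow i (Nat.lt_succ_iff.mp (mem_range.mp hi))) (by positivity)
            (by positivity)
      _ = _ := by rw [sum_const, card_range, nsmul_eq_mul]; push_cast; ring
  have htri : y - ‖aeval x (f - m)‖ ≤ ‖aeval x f‖ := by
    rw [map_sub]
    linarith [norm_sub_norm_le (aeval x m) (aeval x f), norm_sub_rev (aeval x m) (aeval x f)]
  nlinarith

theorem Monic.exists_monic_int_two_le_norm_aeval {f : ℝ[X]} (hf : f.Monic) {D : ℕ} (hD : 0 < D)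
    (hfD : C (D : ℝ) * f ∈ lifts (Int.castRingHom ℝ)) {K : Set A} {c : ℝ} (hc : 1 < c)
    (hK : ∀ x ∈ K, c ≤ ‖aeval x f‖) :
    ∃ p : ℤ[X], p.Monic ∧ ∀ x ∈ K, 2 ≤ ‖aeval x p‖ := by
  set d := f.natDegree
  obtain ⟨B, hB₀, hB⟩ := hf.exists_norm_pow_le_mul_max_norm_aeval (A := A)
  obtain ⟨J, hJ⟩ := pow_unbounded_of_one_lt (B * d * (c / (c - 1))) hc
  obtain ⟨M, hM⟩ := pow_unbounded_of_one_lt 4 hc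
  set n := (J * d)! * D ^ (J * d) * (M + J)
  have hMn : M + J ≤ n := Nat.le_mul_of_pos_left _ (by positivity)
  set e := n - J
  have hn : n * d = e * d + J * d := by rw [← add_mul, Nat.sub_add_cancel (by omega)]
  obtain ⟨p, ε, hp_monic, hε, hp⟩ :=
    hf.exists_monic_map_eq_pow_add_sum hfD (dvd_mul_right _ (M + J)) hn.le (Nat.sub_le n J)
  refine ⟨p, hp_monic, fun x hx => ?_⟩
  have hpx : aeval x p =
      aeval x f ^ n + aeval x (∑ k ∈ range (e * d), C (ε k) * adicMonomial f k) := by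
    rw [← aeval_map_algebraMap ℝ, algebraMap_int_eq, hp, map_add, map_pow]
  set y := ‖aeval x f‖
  have hy : c ≤ y := hK x hx
  have herr := norm_aeval_sum_C_mul_adicMonomial_le
    (fun r hr => (hB x r hr.le).trans_eq (by rw [max_eq_right (hc.le.trans hy)])) hε e
  have hgeom := sum_range_pow_succ_le hc hy e
  have hyn : y ^ n = y ^ J * y ^ e := by rw [← pow_add]; congr 1; omega
  have hcJ : c ^ J ≤ y ^ J := pow_le_pow_left₀ (by linarith) hy J
  have hcn : 4 ≤ y ^ n := hM.le.trans ((pow_le_pow_right₀ hc.le (by omega)).trans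
    (pow_le_pow_left₀ (by linarith) hy n))
  calc (2 : ℝ) ≤ y ^ n - y ^ J * y ^ e / 2 := by linarith
    _ ≤ y ^ n - B / 2 * d * (c / (c - 1) * y ^ e) := by
        have : B * d * (c / (c - 1)) * y ^ e ≤ y ^ J * y ^ e := by
          gcongr; exact hJ.le.trans hcJ
        linarith
    _ ≤ y ^ n - B / 2 * d * ∑ j ∈ range e, y ^ (j + 1) := by gcongr
    _ ≤ ‖aeval x p‖ := by
        rw [hpx, ← norm_pow]
        linarith [norm_sub_le_norm_add (aeval x f ^ n)
          (aeval x (∑ k ∈ range (e * d), C (ε k) * adicMonomial f k))]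

end Polynomial

theorem stmt_1_general (U : Set ℂ)
    (m : Polynomial ℝ) (hm : m.Monic) (c : ℝ) (hc : 1 < c)
    (hbound : ∀ x ∈ Uᶜ, c ≤ ‖(m.map (algebraMap ℝ ℂ)).eval x‖) :
    ∃ (p : Polynomial ℤ) (c' : ℝ), p.Monic ∧ 1 < c' ∧
      ∀ x ∈ Uᶜ, c' ≤ ‖(p.map (algebraMap ℤ ℂ)).eval x‖ := by
  simp only [eval_map_algebraMap] at hbound ⊢
  obtain ⟨f, D, hD, hf, hfD, hfK⟩ := hm.exists_monic_approx_with_denominator hc hbound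
  obtain ⟨p, hp, hpK⟩ := hf.exists_monic_int_two_le_norm_aeval hD hfD (by linarith) hfK
  exact ⟨p, 2, hp, one_lt_two, hpK⟩

theorem stmt_1 (U : Set ℂ) (hU : IsOpen U) (hbdd : Bornology.IsBounded U)
    (m : Polynomial ℝ) (hm : m.Monic) (c : ℝ) (hc : 1 < c)
    (hbound : ∀ x ∈ Uᶜ, c ≤ ‖(m.map (algebraMap ℝ ℂ)).eval x‖) :
    ∃ (p : Polynomial ℤ) (c' : ℝ), p.Monic ∧ 1 < c' ∧
      ∀ x ∈ Uᶜ, c' ≤ ‖(p.map (algebraMap ℤ ℂ)).eval x‖ :=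
  stmt_1_general U m hm c hc hbound
end

section
/- Let U ⊆ ℂ be an open bounded subset and let K = ℂ \ U. Suppose there exist a monic polynomial m ∈ ℝ[X] and a real number c > 1 such that |m(x)| ≥ c for all x ∈ K, where m is evaluated on ℂ via the inclusion ℝ → ℂ. Then there exist a monic polynomial f ∈ ℚ[X] and a real number c' > 1 such that |f(x)| ≥ c' for all x ∈ K, where f is evaluated on ℂ via the inclusion ℚ → ℂ. Moreover f can be taken of the same degree as m. -/
/-!
A monic polynomial of positive degree whose lower coefficients have norms at most `b i` satisfies
`‖p(x)‖ ≥ ‖x‖ - ∑ b i` for `‖x‖ ≥ 1`, so outside a large disc every monic polynomial with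
coefficients near those of `m` is large. Inside the disc, polynomials with close coefficients have
close values. Hence a lower bound `c ≤ |q|` on `K` survives, with any smaller constant, small
perturbations of the coefficients of a monic `q` that keep its degree, and approximating the
coefficients of `m` by rationals gives `f`.
-/

open Polynomial Finset

namespace Polynomial

section NormedField

variable {𝕜 : Type*} [NormedField 𝕜]

theorem norm_sum_mul_pow_le (s : Finset ℕ) (a : ℕ → 𝕜) (x : 𝕜) :
    ‖∑ i ∈ s, a i * x ^ i‖ ≤ ∑ i ∈ s, ‖a i‖ * ‖x‖ ^ i :=
  (norm_sum_le _ _).trans_eq <| by simp only [norm_mul, norm_pow]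

theorem norm_eval_le_of_natDegree_le {p : 𝕜[X]} {n : ℕ} (hp : p.natDegree ≤ n) {ε R : ℝ}
    (hcoeff : ∀ i, ‖p.coeff i‖ ≤ ε) {x : 𝕜} (hx : ‖x‖ ≤ R) :
    ‖p.eval x‖ ≤ ε * ∑ i ∈ range (n + 1), R ^ i := by
  rw [eval_eq_sum_range' (Nat.lt_succ_of_le hp), mul_sum]
  refine (norm_sum_mul_pow_le _ _ _).trans (sum_le_sum fun i _ => ?_)
  exact mul_le_mul (hcoeff i) (pow_le_pow_left₀ (norm_nonneg x) hx i) (by positivity)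
    ((norm_nonneg _).trans (hcoeff i))

theorem Monic.eval_eq_add_sum {p : 𝕜[X]} (hp : p.Monic) (x : 𝕜) :
    p.eval x = x ^ p.natDegree + ∑ i ∈ range p.natDegree, p.coeff i * x ^ i := by
  conv_lhs => rw [hp.as_sum]
  simp [eval_finsetSum]

theorem Monic.norm_sub_sum_le_norm_eval {p : 𝕜[X]} (hp : p.Monic) (hdeg : 0 < p.natDegree)
    {b : ℕ → ℝ} (hb : ∀ i, ‖p.coeff i‖ ≤ b i) {x : 𝕜} (hx : 1 ≤ ‖x‖) :
    ‖x‖ - ∑ i ∈ range p.natDegree, b i ≤ ‖p.eval x‖ := by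
  set n := p.natDegree
  set B := ∑ i ∈ range n, b i
  have hpow : 1 ≤ ‖x‖ ^ (n - 1) := one_le_pow₀ hx
  have htail : ∑ i ∈ range n, ‖p.coeff i‖ * ‖x‖ ^ i ≤ B * ‖x‖ ^ (n - 1) := by
    rw [sum_mul]
    refine sum_le_sum fun i hi => mul_le_mul (hb i) ?_ (by positivity) ((norm_nonneg _).trans (hb i))
    exact pow_le_pow_right₀ hx (by have := mem_range.mp hi; omega)
  have hxn : ‖x‖ ^ n = ‖x‖ * ‖x‖ ^ (n - 1) := by rw [← pow_succ', Nat.sub_add_cancel hdeg]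
  have hlower : (‖x‖ - B) * ‖x‖ ^ (n - 1) ≤ ‖p.eval x‖ := by
    calc (‖x‖ - B) * ‖x‖ ^ (n - 1) ≤ ‖x ^ n‖ - ‖∑ i ∈ range n, p.coeff i * x ^ i‖ := by
          rw [norm_pow, hxn]
          linarith [norm_sum_mul_pow_le (range n) p.coeff x]
      _ ≤ ‖p.eval x‖ := hp.eval_eq_add_sum x ▸ norm_sub_le_norm_add _ _
  rcases le_or_gt (‖x‖ - B) 0 with hneg | hpos
  · exact hneg.trans (norm_nonneg _)
  · exact (le_mul_of_one_le_right hpos.le hpow).trans hlower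

theorem Monic.exists_pos_forall_coeff_near_le_norm_eval {M : 𝕜[X]} (hM : M.Monic) {K : Set 𝕜}
    {c c' : ℝ} (hc' : c' < c) (hMK : ∀ x ∈ K, c ≤ ‖M.eval x‖) :
    ∃ ε > 0, ∀ F : 𝕜[X], F.Monic → F.natDegree = M.natDegree →
      (∀ i, ‖F.coeff i - M.coeff i‖ ≤ ε) → ∀ x ∈ K, c' ≤ ‖F.eval x‖ := by
  set n := M.natDegree
  -- Since `ε ≤ 1`, the coefficients of `F` are bounded by `‖M.coeff i‖ + 1`; beyond `R` the growth
  -- bound `Monic.norm_sub_sum_le_norm_eval` then exceeds `c'`.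
  set R := max 1 (∑ i ∈ range n, (‖M.coeff i‖ + 1) + c')
  set A := ∑ i ∈ range (n + 1), R ^ i
  have hA : 1 ≤ A := by
    simpa using single_le_sum (f := fun i => R ^ i) (fun i _ => pow_nonneg (by positivity) i)
      (mem_range.mpr n.succ_pos)
  set ε := min 1 ((c - c') / A)
  have hεA : ε * A ≤ c - c' :=
    (mul_le_mul_of_nonneg_right (min_le_right _ _) (by linarith)).trans_eq
      (div_mul_cancel₀ _ (by linarith))
  refine ⟨ε, lt_min one_pos (div_pos (by linarith) (by linarith)), fun F hF hFdeg hFM x hx => ?_⟩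
  rcases le_or_gt ‖x‖ R with hxR | hxR
  · have hclose : ‖F.eval x - M.eval x‖ ≤ c - c' := by
      rw [← eval_sub]
      refine (norm_eval_le_of_natDegree_le ?_ (fun i => ?_) hxR).trans hεA
      · exact (natDegree_sub_le _ _).trans (by rw [hFdeg, max_self])
      · simpa only [coeff_sub] using hFM i
    linarith [hMK x hx, norm_le_norm_add_norm_sub' (M.eval x) (F.eval x),
      norm_sub_rev (M.eval x) (F.eval x)]
  rcases Nat.eq_zero_or_pos n with hn | hn
  · have hFM : F = M := by
      rw [hF.natDegree_eq_zero.mp (hFdeg.trans hn), hM.natDegree_eq_zero.mp hn]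
    exact hFM ▸ hc'.le.trans (hMK x hx)
  · have hF_le (i : ℕ) : ‖F.coeff i‖ ≤ ‖M.coeff i‖ + 1 :=
      (norm_le_norm_add_norm_sub' _ _).trans (add_le_add_right ((hFM i).trans (min_le_left _ _)) _)
    have hgrowth := hF.norm_sub_sum_le_norm_eval (hFdeg ▸ hn) hF_le (x := x)
      ((le_max_left _ _).trans hxR.le)
    rw [hFdeg] at hgrowth
    linarith [le_max_right 1 (∑ i ∈ range n, (‖M.coeff i‖ + 1) + c')]

end NormedField

theorem exists_monic_rat_coeff_near {m : ℝ[X]} (hm : m.Monic) {ε : ℝ} (hε : 0 < ε) :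
    ∃ f : ℚ[X], f.Monic ∧ f.natDegree = m.natDegree ∧ ∀ i, |(f.coeff i : ℝ) - m.coeff i| < ε := by
  set n := m.natDegree
  choose q hq using fun i => exists_rat_near (m.coeff i) hε
  set r : ℚ[X] := ∑ i ∈ range n, C (q i) * X ^ i
  have hr_coeff (i : ℕ) : r.coeff i = if i < n then q i else 0 := by
    simp [r, finsetSum_coeff]
  have hr : r.degree < n := by
    rw [degree_lt_iff_coeff_zero]
    intro i hi
    simp [hr_coeff, not_lt.mpr hi]
  refine ⟨X ^ n + r, monic_X_pow_add hr, ?_, fun i => ?_⟩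
  · rw [natDegree_add_eq_left_of_degree_lt (by rwa [degree_X_pow]), natDegree_X_pow]
  · rw [coeff_add, coeff_X_pow, hr_coeff]
    rcases lt_trichotomy i n with hi | rfl | hi
    · simpa [hi, hi.ne, abs_sub_comm] using hq i
    · simpa [n, hm.coeff_natDegree] using hε
    · simpa [hi.ne', hi.not_gt, coeff_eq_zero_of_natDegree_lt hi] using hε

end Polynomial

theorem stmt_2_general (U : Set ℂ)
    (m : Polynomial ℝ) (hm : m.Monic) (c : ℝ) (hc : 1 < c)
    (hbound : ∀ x ∈ Uᶜ, c ≤ ‖(m.map (algebraMap ℝ ℂ)).eval x‖) :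
    ∃ (f : Polynomial ℚ) (c' : ℝ), f.Monic ∧ f.natDegree = m.natDegree ∧ 1 < c' ∧
      ∀ x ∈ Uᶜ, c' ≤ ‖(f.map (algebraMap ℚ ℂ)).eval x‖ := by
  obtain ⟨ε, hε, hstable⟩ := (hm.map (algebraMap ℝ ℂ)).exists_pos_forall_coeff_near_le_norm_eval
    (show (c + 1) / 2 < c by linarith) hbound
  obtain ⟨f, hf, hfdeg, hfm⟩ := exists_monic_rat_coeff_near hm hε
  refine ⟨f, (c + 1) / 2, hf, hfdeg, by linarith, hstable _ (hf.map _) (by simp [hfdeg]) fun i => ?_⟩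
  simpa [← Complex.ofReal_ratCast, ← Complex.ofReal_sub, Complex.norm_real] using (hfm i).le

theorem stmt_2 (U : Set ℂ) (hU : IsOpen U) (hbdd : Bornology.IsBounded U)
    (m : Polynomial ℝ) (hm : m.Monic) (c : ℝ) (hc : 1 < c)
    (hbound : ∀ x ∈ Uᶜ, c ≤ ‖(m.map (algebraMap ℝ ℂ)).eval x‖) :
    ∃ (f : Polynomial ℚ) (c' : ℝ), f.Monic ∧ f.natDegree = m.natDegree ∧ 1 < c' ∧
      ∀ x ∈ Uᶜ, c' ≤ ‖(f.map (algebraMap ℚ ℂ)).eval x‖ :=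
  stmt_2_general U m hm c hc hbound
end

section
/- Let f ∈ ℚ[X] be a monic polynomial of degree d ≥ 1, let N be a positive integer, and let k be a positive integer such that k · (coefficient of X^j in f) ∈ ℤ for every j < d. Then for every positive integer n and every integer i with 0 ≤ i ≤ N, one has k^N · (coefficient of X^(n·d − i) in f^n) ∈ ℤ. -/
/-!
Rescaling the variable by `k` turns `f` into the polynomial `f.scaleRoots k`, whose coefficient of
`X ^ j` is `k ^ (d - j) * f.coeff j`; the hypothesis makes it an integral polynomial. Rescaling is
multiplicative on monic polynomials, so `(f ^ n).scaleRoots k = (f.scaleRoots k) ^ n` is integral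
as well, i.e. `k ^ (n * d - m) * (f ^ n).coeff m ∈ ℤ` for every `m`. For `m = n * d - i` the
exponent is at most `i ≤ N`.
-/

open Polynomial

namespace Polynomial.Monic

variable {A R : Type*} [CommSemiring A] [CommSemiring R] {φ : A →+* R} {p : R[X]}

theorem scaleRoots_pow (hp : p.Monic) (r : R) (n : ℕ) :
    (p ^ n).scaleRoots r = p.scaleRoots r ^ n := by
  nontriviality R
  exact pow_scaleRoots' p r n (by simp [hp.leadingCoeff])

theorem scaleRoots_mem_lifts (hp : p.Monic) {c : R} (hc : c ∈ φ.rangeS)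
    (hcoeff : ∀ j < p.natDegree, c * p.coeff j ∈ φ.rangeS) : p.scaleRoots c ∈ lifts φ := by
  rw [lifts_iff_coeff_lifts]
  intro j
  rw [coeff_scaleRoots, ← RingHom.coe_rangeS, SetLike.mem_coe]
  rcases lt_trichotomy j p.natDegree with hj | rfl | hj
  · have hexp : p.natDegree - j = (p.natDegree - j - 1) + 1 := by omega
    rw [hexp, pow_succ, mul_comm (c ^ _), ← mul_assoc, mul_comm (p.coeff j) c]
    exact mul_mem (hcoeff j hj) (pow_mem hc _)
  · simp [hp.coeff_natDegree, one_mem]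
  · simp [coeff_eq_zero_of_natDegree_lt hj, zero_mem]

theorem coeff_pow_mul_pow_mem_rangeS (hp : p.Monic) {c : R} (hc : c ∈ φ.rangeS)
    (hcoeff : ∀ j < p.natDegree, c * p.coeff j ∈ φ.rangeS) (n m : ℕ) :
    (p ^ n).coeff m * c ^ (n * p.natDegree - m) ∈ φ.rangeS := by
  have hlifts := pow_mem (hp.scaleRoots_mem_lifts hc hcoeff) n
  rw [← hp.scaleRoots_pow, lifts_iff_coeff_lifts] at hlifts
  simpa [hp.natDegree_pow] using hlifts m

end Polynomial.Monic

theorem stmt_8_general (f : Polynomial ℚ) (d : ℕ) (hmonic : f.Monic)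
    (hdeg : f.natDegree = d) (N : ℕ) (k : ℕ)
    (hint : ∀ j < d, (k : ℚ) * f.coeff j ∈ Set.range (Int.cast : ℤ → ℚ)) :
    ∀ n : ℕ, 0 < n → ∀ i : ℕ, i ≤ N →
      (k : ℚ) ^ N * (f ^ n).coeff (n * d - i) ∈ Set.range (Int.cast : ℤ → ℚ) := by
  intro n _ i hi
  have hk : (k : ℚ) ∈ (Int.castRingHom ℚ).rangeS := ⟨k, by simp⟩
  subst hdeg
  have hcoeff := hmonic.coeff_pow_mul_pow_mem_rangeS hk hint n (n * f.natDegree - i)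
  set e := n * f.natDegree - (n * f.natDegree - i)
  have hsplit : (k : ℚ) ^ N = (k : ℚ) ^ (N - e) * (k : ℚ) ^ e := by
    rw [← pow_add]; congr 1; omega
  rw [hsplit, mul_assoc, mul_comm ((k : ℚ) ^ e)]
  exact mul_mem (pow_mem hk _) hcoeff

theorem stmt_8 (f : Polynomial ℚ) (d : ℕ) (hd : 1 ≤ d) (hmonic : f.Monic)
    (hdeg : f.natDegree = d) (N : ℕ) (hN : 0 < N) (k : ℕ) (hk : 0 < k)
    (hint : ∀ j < d, (k : ℚ) * f.coeff j ∈ Set.range (Int.cast : ℤ → ℚ)) :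
    ∀ n : ℕ, 0 < n → ∀ i : ℕ, i ≤ N →
      (k : ℚ) ^ N * (f ^ n).coeff (n * d - i) ∈ Set.range (Int.cast : ℤ → ℚ) :=
  stmt_8_general f d hmonic hdeg N k hint
end

section
/- Let U ⊆ ℂ be open, let φ : ℂ → ℂ be analytic on U, let p ∈ ℤ[X] be monic of degree m ≥ 1 (evaluated on ℂ via ℤ → ℂ), and let c > 1 be such that |p((φ z)⁻¹)| ≥ c for every z ∈ U with φ z ≠ 0. Define F : ℂ → ℂ by F z = 0 if φ z = 0 and F z = (p((φ z)⁻¹))⁻¹ otherwise. Then F is analytic on U (in particular, the apparent singularities of 1/p(1/φ) at the zeros of φ are removable and F is the holomorphic extension). -/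
/-! With `n = deg q` and `rev q` the reversed polynomial, `1 / q(1/w) = w ^ n / (rev q)(w)` for
`w ≠ 0`, and the right-hand side vanishes at `w = 0` since `n ≥ 1`; so `F = φ ^ n / (rev q ∘ φ)`.
The denominator is `lead q ≠ 0` where `φ = 0` and `φ ^ n q(1/φ)` elsewhere, which the bound
`|q(1/φ)| ≥ c > 0` keeps away from zero; hence `F` is a quotient of analytic functions with
nonvanishing denominator. -/

open Polynomial

namespace Polynomial

variable {K : Type*} [Field K]

theorem eval_reverse_eq_pow_mul_eval_inv (q : K[X]) {w : K} (hw : w ≠ 0) :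
    q.reverse.eval w = w ^ q.natDegree * q.eval w⁻¹ := by
  let _ := invertibleOfNonzero (inv_ne_zero hw)
  have h := eval₂_reverse_mul_pow (RingHom.id K) w⁻¹ q
  rw [invOf_eq_inv, inv_inv] at h
  rw [eval, eval, ← h, mul_left_comm, ← mul_pow, mul_inv_cancel₀ hw, one_pow, mul_one]

theorem eval_reverse_ne_zero (q : K[X]) (hq : q ≠ 0) {w : K}
    (hw : w ≠ 0 → q.eval w⁻¹ ≠ 0) : q.reverse.eval w ≠ 0 := by
  rcases eq_or_ne w 0 with rfl | hw0
  · rw [← coeff_zero_eq_eval_zero, coeff_zero_reverse]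
    exact leadingCoeff_ne_zero.mpr hq
  · rw [q.eval_reverse_eq_pow_mul_eval_inv hw0]
    exact mul_ne_zero (pow_ne_zero _ hw0) (hw hw0)

theorem ite_inv_eval_inv_eq_pow_mul_inv_eval_reverse [DecidableEq K] (q : K[X])
    (hq : q.natDegree ≠ 0) (w : K) :
    (if w = 0 then 0 else (q.eval w⁻¹)⁻¹) = w ^ q.natDegree * (q.reverse.eval w)⁻¹ := by
  rcases eq_or_ne w 0 with rfl | hw
  · rw [if_pos rfl, zero_pow hq, zero_mul]
  · rw [if_neg hw, q.eval_reverse_eq_pow_mul_eval_inv hw, mul_inv, ← mul_assoc,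
      mul_inv_cancel₀ (pow_ne_zero _ hw), one_mul]

end Polynomial

theorem stmt_9_general (U : Set ℂ) (φ : ℂ → ℂ) (hφ : AnalyticOnNhd ℂ φ U)
    (p : Polynomial ℤ) (m : ℕ) (hm : 1 ≤ m) (hpd : p.natDegree = m)
    (c : ℝ) (hc : 1 < c)
    (hbound : ∀ z ∈ U, φ z ≠ 0 →
      c ≤ ‖(p.map (algebraMap ℤ ℂ)).eval (φ z)⁻¹‖) :
    AnalyticOnNhd ℂ
      (fun z => if φ z = 0 then 0 else ((p.map (algebraMap ℤ ℂ)).eval (φ z)⁻¹)⁻¹) U := by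
  set q : ℂ[X] := p.map (algebraMap ℤ ℂ)
  have hqd : q.natDegree = m := by
    rw [natDegree_map_eq_of_injective (RingHom.injective_int _), hpd]
  have hq : q ≠ 0 := ne_zero_of_natDegree_gt (n := 0) (by omega)
  simp_rw [q.ite_inv_eval_inv_eq_pow_mul_inv_eval_reverse (by omega)]
  intro z hz
  have hden : q.reverse.eval (φ z) ≠ 0 := by
    refine q.eval_reverse_ne_zero hq fun hφz hzero => ?_
    have := hbound z hz hφz
    rw [hzero, norm_zero] at this
    linarith
  exact ((hφ z hz).pow _).mul (((hφ z hz).aeval_polynomial q.reverse).inv hden)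

theorem stmt_9 (U : Set ℂ) (hU : IsOpen U) (φ : ℂ → ℂ) (hφ : AnalyticOnNhd ℂ φ U)
    (p : Polynomial ℤ) (m : ℕ) (hm : 1 ≤ m) (hpm : p.Monic) (hpd : p.natDegree = m)
    (c : ℝ) (hc : 1 < c)
    (hbound : ∀ z ∈ U, φ z ≠ 0 →
      c ≤ ‖(p.map (algebraMap ℤ ℂ)).eval (φ z)⁻¹‖) :
    AnalyticOnNhd ℂ
      (fun z => if φ z = 0 then 0 else ((p.map (algebraMap ℤ ℂ)).eval (φ z)⁻¹)⁻¹) U :=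
  stmt_9_general U φ hφ p m hm hpd c hc hbound
end
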